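/- arXiv:1607.07096 — 3 statements merged into one kernel-verified Lean document; each statement's English description precedes it below -/
import Mathlib

section
/- For every σ with 1/2 < σ ≤ 1 there exists a constant c₀ > 0, depending only on σ and independent of h, such that for every h > 0 and every grid function u : ℤ → ℂ with Σ_{j∈ℤ}|u_j| < ∞, one has sup_{j∈ℤ} |u_j| ≤ c₀ ‖u‖_{H^σ}. -/
open MeasureTheory

/-- The semi-discrete Fourier transform `û(k) = h Σ_{j∈ℤ} u_j e^{-i k x_j}`, `x_j = j h`. -/
noncomputable def sdft (h : ℝ) (u : ℤ → ℂ) (k : ℝ) : ℂ :=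
  (h : ℂ) * ∑' j : ℤ, u j * Complex.exp (-(Complex.I * (k : ℂ) * ((j : ℂ) * (h : ℂ))))

/-!
By the inversion formula `2π u_j = ∫_{-π/h}^{π/h} û(k) e^{i k x_j} dk`, and by Cauchy–Schwarz
with the weight `w(k) = 1 + |k|^{2σ}`,
`2π |u_j| ≤ (∫ w⁻¹)^{1/2} (∫ w |û|²)^{1/2}`.
Parseval's identity `∫ |û|² = 2π ‖u‖²` bounds the second factor by `(2π ‖u‖_{H^σ}²)^{1/2}`,
and the first one by `(∫_ℝ w⁻¹)^{1/2}`, which is finite and independent of `h` exactly when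
`2σ > 1`.
-/

open Complex ComplexConjugate Real

@[simp]
lemma norm_cexp_I_mul_mul (k h : ℝ) (j : ℤ) : ‖cexp (I * k * (j * h))‖ = 1 := by
  simp [norm_exp]

@[simp]
lemma norm_cexp_neg_I_mul_mul (k h : ℝ) (j : ℤ) : ‖cexp (-(I * k * (j * h)))‖ = 1 := by
  simp [norm_exp]

lemma integral_cexp_I_mul_int_mul {h : ℝ} (hh : h ≠ 0) (n : ℤ) :
    ∫ k in -(π / h)..π / h, cexp (I * k * (n * h)) = if n = 0 then ((2 * π / h : ℝ) : ℂ) else 0 := by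
  have hh' : (h : ℂ) ≠ 0 := ofReal_ne_zero.2 hh
  split_ifs with hn
  · simp only [hn, Int.cast_zero, zero_mul, mul_zero, Complex.exp_zero,
      intervalIntegral.integral_const, real_smul, mul_one]
    push_cast
    ring
  · have hc : I * (n * h) ≠ 0 := by simp [hn, hh]
    have hcomm : ∀ k : ℝ, I * k * (n * h) = I * (n * h) * k := fun k => by ring
    simp_rw [hcomm]
    rw [integral_exp_mul_complex hc, div_eq_zero_iff, sub_eq_zero]
    left
    refine Complex.exp_eq_exp_iff_exists_int.2 ⟨n, ?_⟩
    push_cast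
    field_simp
    ring

section sdft

variable {u : ℤ → ℂ}

lemma summable_sdft_term (h : ℝ) (hu : Summable fun j => ‖u j‖) (k : ℝ) :
    Summable fun j : ℤ => u j * cexp (-(I * k * (j * h))) :=
  .of_norm (by simpa using hu)

lemma norm_sdft_le (h : ℝ) (hu : Summable fun j => ‖u j‖) (k : ℝ) :
    ‖sdft h u k‖ ≤ |h| * ∑' j, ‖u j‖ := by
  rw [sdft, norm_mul, norm_real, Real.norm_eq_abs]
  gcongr
  simpa using norm_tsum_le_tsum_norm (summable_sdft_term h hu k).norm

lemma continuous_sdft (h : ℝ) (hu : Summable fun j => ‖u j‖) : Continuous (sdft h u) :=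
  continuous_const.mul <| continuous_tsum (fun j => by fun_prop) hu fun j k => by simp

lemma hasSum_integral_mul_sdft (h : ℝ) (hu : Summable fun j => ‖u j‖) {φ : ℝ → ℂ}
    (hφ : Continuous φ) (a b : ℝ) :
    HasSum (fun j : ℤ => h * u j * ∫ k in a..b, φ k * cexp (-(I * k * (j * h))))
      (∫ k in a..b, φ k * sdft h u k) := by
  have H := intervalIntegral.hasSum_integral_of_dominated_convergence (a := a) (b := b)
    (μ := volume) (F := fun j k => φ k * (h * (u j * cexp (-(I * k * (j * h))))))
    (fun j k => ‖u j‖ * (|h| * ‖φ k‖)) (fun j => (by fun_prop : Continuous _).aestronglyMeasurable)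
    (fun j => ae_of_all _ fun k _ => le_of_eq (by
      simp only [norm_mul, norm_real, Real.norm_eq_abs, norm_cexp_neg_I_mul_mul, mul_one]
      ring))
    (ae_of_all _ fun k _ => hu.mul_right _)
    (by simp_rw [tsum_mul_right]; exact Continuous.intervalIntegrable (by fun_prop) _ _)
    (ae_of_all _ fun k _ => ((summable_sdft_term h hu k).hasSum.mul_left (h : ℂ)).mul_left (φ k))
  have e : ∀ j : ℤ, ∫ k in a..b, φ k * (h * (u j * cexp (-(I * k * (j * h))))) =
      h * u j * ∫ k in a..b, φ k * cexp (-(I * k * (j * h))) := fun j => by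
    rw [← intervalIntegral.integral_const_mul]
    congr 1 with k
    ring
  simpa only [e, sdft] using H

lemma integral_cexp_mul_sdft {h : ℝ} (hh : h ≠ 0) (hu : Summable fun j => ‖u j‖) (j : ℤ) :
    ∫ k in -(π / h)..π / h, cexp (I * k * (j * h)) * sdft h u k = 2 * π * u j := by
  have hh' : (h : ℂ) ≠ 0 := ofReal_ne_zero.2 hh
  have H := hasSum_integral_mul_sdft h hu (φ := fun k => cexp (I * k * (j * h)))
    (by fun_prop) (-(π / h)) (π / h)
  have hterm : ∀ i : ℤ, h * u i * ∫ k in -(π / h)..π / h,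
      cexp (I * k * (j * h)) * cexp (-(I * k * (i * h))) = if i = j then 2 * π * u j else 0 := by
    intro i
    have e : ∀ k : ℝ, cexp (I * k * (j * h)) * cexp (-(I * k * (i * h))) =
        cexp (I * k * ((j - i : ℤ) * h)) := fun k => by
      rw [← Complex.exp_add]; push_cast; ring_nf
    simp_rw [e, integral_cexp_I_mul_int_mul hh, sub_eq_zero, eq_comm (a := j)]
    split_ifs with hij
    · subst hij; push_cast; field_simp
    · rw [mul_zero]
  simp_rw [hterm] at H
  exact H.unique (hasSum_ite_eq j _)

lemma integral_norm_sdft_sq {h : ℝ} (hh : h ≠ 0) (hu : Summable fun j => ‖u j‖) :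
    ∫ k in -(π / h)..π / h, ‖sdft h u k‖ ^ 2 = 2 * π * (h * ∑' j, ‖u j‖ ^ 2) := by
  have H := hasSum_integral_mul_sdft h hu (φ := fun k => conj (sdft h u k))
    (continuous_conj.comp (continuous_sdft h hu)) (-(π / h)) (π / h)
  have hterm : ∀ i : ℤ, h * u i * ∫ k in -(π / h)..π / h,
      conj (sdft h u k) * cexp (-(I * k * (i * h))) = ((2 * π * h * ‖u i‖ ^ 2 : ℝ) : ℂ) := by
    intro i
    have e : ∀ k : ℝ, conj (sdft h u k) * cexp (-(I * k * (i * h))) =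
        conj (cexp (I * k * (i * h)) * sdft h u k) := fun k => by
      rw [map_mul, ← Complex.exp_conj, mul_comm]
      simp
    simp_rw [e, intervalIntegral.intervalIntegral_conj, integral_cexp_mul_sdft hh hu i, map_mul,
      map_ofNat, conj_ofReal]
    push_cast
    rw [← mul_conj']
    ring
  simp_rw [hterm, conj_mul', ← ofReal_pow, intervalIntegral.integral_ofReal] at H
  rw [← (hasSum_ofReal.1 H).tsum_eq, ← tsum_mul_left, ← tsum_mul_left]
  congr with j
  ring

lemma integral_one_add_abs_rpow_mul_norm_sdft_sq {h p : ℝ} (hh : h ≠ 0) (hp : 0 ≤ p)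
    (hu : Summable fun j => ‖u j‖) :
    ∫ k in -(π / h)..π / h, (1 + |k| ^ p) * ‖sdft h u k‖ ^ 2 =
      2 * π * (h * ∑' j, ‖u j‖ ^ 2) + ∫ k in -(π / h)..π / h, |k| ^ p * ‖sdft h u k‖ ^ 2 := by
  have hcont := continuous_sdft h hu
  simp_rw [add_mul, one_mul]
  rw [intervalIntegral.integral_add (Continuous.intervalIntegrable (by fun_prop) _ _)
    (Continuous.intervalIntegrable (by fun_prop (disch := exact hp)) _ _),
    integral_norm_sdft_sq hh hu]

lemma two_pi_mul_norm_le_integral_norm_sdft {h : ℝ} (hh : 0 < h)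
    (hu : Summable fun j => ‖u j‖) (j : ℤ) :
    2 * π * ‖u j‖ ≤ ∫ k in -(π / h)..π / h, ‖sdft h u k‖ :=
  calc 2 * π * ‖u j‖ = ‖∫ k in -(π / h)..π / h, cexp (I * k * (j * h)) * sdft h u k‖ := by
        rw [integral_cexp_mul_sdft hh.ne' hu j]
        simp [abs_of_pos pi_pos]
    _ ≤ ∫ k in -(π / h)..π / h, ‖cexp (I * k * (j * h)) * sdft h u k‖ :=
        intervalIntegral.norm_integral_le_integral_norm (neg_le_self (by positivity))
    _ = ∫ k in -(π / h)..π / h, ‖sdft h u k‖ := by simp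

end sdft

lemma intervalIntegral_mul_le_sqrt_mul_sqrt {f g : ℝ → ℝ} {a b : ℝ} (hab : a ≤ b)
    (hf : Continuous f) (hg : Continuous g) (hf0 : 0 ≤ f) (hg0 : 0 ≤ g) :
    ∫ x in a..b, f x * g x ≤ √(∫ x in a..b, f x ^ 2) * √(∫ x in a..b, g x ^ 2) := by
  have memLp {f : ℝ → ℝ} (hf : Continuous f) :
      MemLp f (ENNReal.ofReal 2) (volume.restrict (Set.Ioc a b)) := by
    rw [show ENNReal.ofReal 2 = 2 by norm_num]
    exact (memLp_two_iff_integrable_sq hf.aestronglyMeasurable).2 (hf.pow 2).integrableOn_Ioc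
  simpa only [intervalIntegral.integral_of_le hab, Real.sqrt_eq_rpow, Real.rpow_two] using
    integral_mul_le_Lp_mul_Lq_of_nonneg Real.HolderConjugate.two_two
      (ae_of_all _ hf0) (ae_of_all _ hg0) (memLp hf) (memLp hg)

lemma intervalIntegral_norm_le_sqrt_mul_sqrt {E : Type*} [NormedAddCommGroup E] {f : ℝ → E}
    {w : ℝ → ℝ} {a b : ℝ} (hab : a ≤ b) (hf : Continuous f) (hw : Continuous w)
    (hw0 : ∀ x, 0 < w x) :
    ∫ x in a..b, ‖f x‖ ≤ √(∫ x in a..b, (w x)⁻¹) * √(∫ x in a..b, w x * ‖f x‖ ^ 2) := by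
  have hw' : ∀ x, w x ≠ 0 := fun x => (hw0 x).ne'
  have H := intervalIntegral_mul_le_sqrt_mul_sqrt hab (f := fun x => √(w x)⁻¹)
    (g := fun x => √(w x) * ‖f x‖) (by fun_prop) (by fun_prop)
    (fun x => Real.sqrt_nonneg _) (fun x => by positivity)
  have e₁ : ∀ x, √(w x)⁻¹ * (√(w x) * ‖f x‖) = ‖f x‖ := fun x => by
    rw [Real.sqrt_inv, inv_mul_cancel_left₀ (Real.sqrt_pos.2 (hw0 x)).ne']
  have e₂ : ∀ x, √(w x)⁻¹ ^ 2 = (w x)⁻¹ := fun x => Real.sq_sqrt (inv_pos.2 (hw0 x)).le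
  have e₃ : ∀ x, (√(w x) * ‖f x‖) ^ 2 = w x * ‖f x‖ ^ 2 := fun x => by
    rw [mul_pow, Real.sq_sqrt (hw0 x).le]
  simpa only [e₁, e₂, e₃] using H

lemma two_pi_mul_norm_le_sqrt_mul_sqrt {u : ℤ → ℂ} {h : ℝ} (hh : 0 < h)
    (hu : Summable fun j => ‖u j‖) {w : ℝ → ℝ} (hw : Continuous w) (hw0 : ∀ k, 0 < w k) (j : ℤ) :
    2 * π * ‖u j‖ ≤ √(∫ k in -(π / h)..π / h, (w k)⁻¹) *
      √(∫ k in -(π / h)..π / h, w k * ‖sdft h u k‖ ^ 2) :=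
  (two_pi_mul_norm_le_integral_norm_sdft hh hu j).trans <|
    intervalIntegral_norm_le_sqrt_mul_sqrt (neg_le_self (by positivity)) (continuous_sdft h hu)
      hw hw0

lemma integrable_inv_one_add_abs_rpow {p : ℝ} (hp : 1 < p) :
    Integrable fun x : ℝ => (1 + |x| ^ p)⁻¹ := by
  have hcont : Continuous fun x : ℝ => 1 + |x| ^ p := by fun_prop (disch := linarith)
  refine ((integrable_one_add_norm (E := ℝ) (r := p) (by simpa)).const_mul (2 ^ (p - 1))).mono'
    (hcont.inv₀ fun x => by positivity).aestronglyMeasurable (ae_of_all _ fun x => ?_)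
  have key : (1 + |x|) ^ p ≤ 2 ^ (p - 1) * (1 + |x| ^ p) := by
    have := NNReal.coe_le_coe.2 (NNReal.rpow_add_le_mul_rpow_add_rpow 1 ‖x‖₊ hp.le)
    push_cast at this
    simpa using this
  rw [Real.norm_eq_abs, Real.rpow_neg (by positivity), ← div_eq_mul_inv,
    le_div_iff₀ (by positivity), abs_of_pos (by positivity), inv_mul_le_iff₀ (by positivity)]
  simpa [mul_comm] using key

theorem discrete_sobolev_embedding_general (σ : ℝ) (hσ1 : 1 / 2 < σ) :
    ∃ c₀ > (0 : ℝ), ∀ h : ℝ, 0 < h → ∀ u : ℤ → ℂ, (Summable fun j : ℤ => ‖u j‖) →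
      ∀ j : ℤ, ‖u j‖ ≤ c₀ * Real.sqrt
        (h * ∑' i : ℤ, ‖u i‖ ^ 2 +
          ∫ k in (-(Real.pi / h))..(Real.pi / h), |k| ^ (2 * σ) * ‖sdft h u k‖ ^ 2) := by
  have hp : 1 < 2 * σ := by linarith
  have hw0 : ∀ k : ℝ, 0 < 1 + |k| ^ (2 * σ) := fun k => by positivity
  have hwi := integrable_inv_one_add_abs_rpow hp
  set C := ∫ k : ℝ, (1 + |k| ^ (2 * σ))⁻¹
  have hC : 0 < C := (integral_pos_iff_support_of_nonneg (fun k => (inv_pos.2 (hw0 k)).le) hwi).2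
    (by simp [Function.support_eq_univ fun k => (inv_pos.2 (hw0 k)).ne'])
  refine ⟨√C / √(2 * π), by positivity, fun h hh u hu j => ?_⟩
  have hab : -(π / h) ≤ π / h := neg_le_self (by positivity)
  set S := h * ∑' i, ‖u i‖ ^ 2
  set W := ∫ k in -(π / h)..π / h, |k| ^ (2 * σ) * ‖sdft h u k‖ ^ 2
  have h_local : ∫ k in -(π / h)..π / h, (1 + |k| ^ (2 * σ))⁻¹ ≤ C := by
    rw [intervalIntegral.integral_of_le hab]
    exact setIntegral_le_integral hwi (ae_of_all _ fun k => (inv_pos.2 (hw0 k)).le)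
  have h_weighted :
      ∫ k in -(π / h)..π / h, (1 + |k| ^ (2 * σ)) * ‖sdft h u k‖ ^ 2 ≤ 2 * π * (S + W) := by
    have hW : 0 ≤ W := intervalIntegral.integral_nonneg hab fun k _ => by positivity
    rw [integral_one_add_abs_rpow_mul_norm_sdft_sq hh.ne' (by linarith) hu]
    nlinarith [pi_gt_three]
  have h_main := two_pi_mul_norm_le_sqrt_mul_sqrt hh hu
    (by fun_prop (disch := linarith) : Continuous fun k : ℝ => 1 + |k| ^ (2 * σ)) hw0 j
  have h_sqrt : √(2 * π) ^ 2 = 2 * π := Real.sq_sqrt (by positivity)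
  calc ‖u j‖ ≤ (2 * π)⁻¹ * (√C * √(2 * π * (S + W))) := by
        rw [le_inv_mul_iff₀ (by positivity)]
        exact h_main.trans (mul_le_mul (Real.sqrt_le_sqrt h_local) (Real.sqrt_le_sqrt h_weighted)
          (Real.sqrt_nonneg _) (Real.sqrt_nonneg _))
    _ = √C / √(2 * π) * √(S + W) := by
        rw [Real.sqrt_mul (by positivity)]
        field_simp
        rw [h_sqrt]

/-- Discrete fractional Sobolev embedding: `‖u‖_∞ ≤ c₀ ‖u‖_{H^σ}` for `1/2 < σ ≤ 1`,
with `c₀` independent of the mesh size `h` and of `u`. -/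
theorem discrete_sobolev_embedding (σ : ℝ) (hσ1 : 1 / 2 < σ) (hσ2 : σ ≤ 1) :
    ∃ c₀ > (0 : ℝ), ∀ h : ℝ, 0 < h → ∀ u : ℤ → ℂ, (Summable fun j : ℤ => ‖u j‖) →
      ∀ j : ℤ, ‖u j‖ ≤ c₀ * Real.sqrt
        (h * ∑' i : ℤ, ‖u i‖ ^ 2 +
          ∫ k in (-(Real.pi / h))..(Real.pi / h), |k| ^ (2 * σ) * ‖sdft h u k‖ ^ 2) :=
  discrete_sobolev_embedding_general σ hσ1
end

section
/- Let β ∈ (1,2], θ ∈ [0,1], α > 0, M ≥ 2 an integer, and h > 0. Then the (M−1)×(M−1) real matrix A with entries A_{j,l} = α δ_{j,l} − θ h^{−β} w_{j−l+1}^{(β)} − (1−θ) h^{−β} w_{l−j+1}^{(β)} for 1 ≤ j,l ≤ M−1, where w_m^{(β)} is taken to be 0 for m < 0 and δ_{j,l} is the Kronecker delta, is invertible. Consequently the WSGD scheme is uniquely solvable for any right-hand side data. -/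
/-!
If `A *ᵥ v = 0` then `v ⬝ᵥ (A + Aᵀ) *ᵥ v = 0`, so it suffices that `A + Aᵀ` is positive definite.
There `θ` cancels: off the diagonal, the entry at distance `m` is `-h^(-β) (w_(m+1) + w_(1-m))`.
For `1 < β ≤ 2` these entries are `≤ 0`, and `∑_(1 ≤ m ≤ K) (w_(m+1) + w_(1-m)) ≤ -w₁`:
since the partial sums of `g^(β)` are `g^(β-1)`, a partial sum of the weights is the same
`λ`-combination of `g^(β-1)` as a weight is of `g^(β)`, and the ratio `g_(k+1) / g_k = (k-γ)/(k+1)`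
turns such a combination into a single `g_k` times an explicit polynomial of fixed sign.
As each distance occurs at most twice in a row, `A + Aᵀ` is strictly diagonally dominant with
diagonal `2 (α - h^(-β) w₁) > 0`, hence positive definite by Gershgorin's theorem.
-/

/-- `g_k^{(β)} = (-1)^k (β choose k)`. -/
noncomputable def gcoef (β : ℝ) (k : ℕ) : ℝ :=
  (-1 : ℝ) ^ k * ((∏ i ∈ Finset.range k, (β - i)) / (Nat.factorial k))

/-- The WSGD weights `w_k^{(β)}`. -/
noncomputable def wsgd (β : ℝ) : ℕ → ℝ
  | 0 => (β ^ 2 + 3 * β + 2) / 12 * gcoef β 0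
  | 1 => (β ^ 2 + 3 * β + 2) / 12 * gcoef β 1 + (4 - β ^ 2) / 6 * gcoef β 0
  | (k + 2) => (β ^ 2 + 3 * β + 2) / 12 * gcoef β (k + 2)
      + (4 - β ^ 2) / 6 * gcoef β (k + 1) + (β ^ 2 - 3 * β + 2) / 12 * gcoef β k

/-- The WSGD weights extended to `ℤ`, taken to be `0` for negative indices. -/
noncomputable def wz (β : ℝ) (m : ℤ) : ℝ := if m < 0 then 0 else wsgd β m.toNat

open Finset Matrix
open scoped ComplexOrder

theorem Fin.sum_erase_le_two_nsmul_sum_Icc {M : Type*} [AddCommMonoid M] [PartialOrder M]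
    [IsOrderedAddMonoid M] {n : ℕ} (f : ℕ → M) (hf : ∀ m, 0 < m → 0 ≤ f m) (i : Fin n) :
    ∑ l ∈ univ.erase i, f ((i : ℤ) - l).natAbs ≤ 2 • ∑ m ∈ Icc 1 n, f m := by
  set φ : Fin n → ℕ := fun l => ((i : ℤ) - l).natAbs
  have hmaps : ∀ l ∈ univ.erase i, φ l ∈ Icc 1 n := by
    intro l hl
    have := Fin.val_ne_of_ne (ne_of_mem_erase hl)
    simp only [mem_Icc, φ]
    omega
  have hfiber : ∀ m, #{l ∈ univ.erase i | φ l = m} ≤ 2 := by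
    intro m
    refine (card_le_card_of_injOn (fun l : Fin n => (l : ℤ))
      (t := {(i : ℤ) - m, (i : ℤ) + m}) ?_ ?_).trans card_le_two
    · intro l hl
      have := (mem_filter.1 hl).2
      simp only [coe_insert, coe_singleton, Set.mem_insert_iff, Set.mem_singleton_iff, φ] at this ⊢
      omega
    · intro a _ b _ hab
      exact Fin.ext (Int.ofNat_inj.mp hab)
  calc ∑ l ∈ univ.erase i, f (φ l)
      = ∑ m ∈ Icc 1 n, ∑ l ∈ univ.erase i with φ l = m, f (φ l) :=
        (sum_fiberwise_of_maps_to hmaps _).symm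
    _ = ∑ m ∈ Icc 1 n, #{l ∈ univ.erase i | φ l = m} • f m := by
        refine sum_congr rfl fun m _ => ?_
        rw [sum_congr rfl fun l hl => congrArg f (mem_filter.1 hl).2, Finset.sum_const]
    _ ≤ ∑ m ∈ Icc 1 n, 2 • f m := by
        refine sum_le_sum fun m hm => nsmul_le_nsmul_left (hf m ?_) (hfiber m)
        exact (mem_Icc.1 hm).1
    _ = 2 • ∑ m ∈ Icc 1 n, f m := (smul_sum ..).symm

theorem Matrix.posDef_of_sum_row_lt_diag {𝕜 n : Type*} [RCLike 𝕜] [Fintype n] [DecidableEq n]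
    {S : Matrix n n 𝕜} (hS : S.IsHermitian)
    (h : ∀ k, ∑ j ∈ Finset.univ.erase k, ‖S k j‖ < RCLike.re (S k k)) : S.PosDef := by
  rw [hS.posDef_iff_eigenvalues_pos]
  intro i
  have hμ : Module.End.HasEigenvalue (toLin' S) (hS.eigenvalues i : 𝕜) := by
    refine Module.End.hasEigenvalue_of_hasEigenvector (x := ⇑(hS.eigenvectorBasis i)) ⟨?_, ?_⟩
    · rw [Module.End.mem_eigenspace_iff, toLin'_apply, hS.mulVec_eigenvectorBasis,
        RCLike.real_smul_eq_coe_smul (K := 𝕜)]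
    · simpa using (hS.eigenvectorBasis.orthonormal.ne_zero i)
  obtain ⟨k, hk⟩ := eigenvalue_mem_ball hμ
  rw [Metric.mem_closedBall, dist_comm, dist_eq_norm] at hk
  have := RCLike.re_le_norm (S k k - hS.eigenvalues i)
  simp only [map_sub, RCLike.ofReal_re] at this
  linarith [h k]

theorem Matrix.isUnit_of_posDef_add_conjTranspose {𝕜 n : Type*} [RCLike 𝕜] [Fintype n]
    [DecidableEq n] {A : Matrix n n 𝕜} (hA : (A + Aᴴ).PosDef) : IsUnit A := by
  rw [isUnit_iff_isUnit_det, isUnit_iff_ne_zero]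
  intro hdet
  obtain ⟨v, hv, hAv⟩ := exists_mulVec_eq_zero_iff.mpr hdet
  have := hA.dotProduct_mulVec_pos hv
  rw [add_mulVec, dotProduct_add, hAv, dotProduct_zero, zero_add, dotProduct_mulVec,
    vecMul_conjTranspose, star_star, hAv] at this
  simp at this

section gcoef

variable {β : ℝ}

@[simp]
theorem gcoef_zero (β : ℝ) : gcoef β 0 = 1 := by simp [gcoef]

theorem gcoef_succ (β : ℝ) (k : ℕ) : gcoef β (k + 1) = gcoef β k * ((k - β) / (k + 1)) := by
  unfold gcoef
  rw [prod_range_succ, pow_succ, Nat.factorial_succ]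
  push_cast
  field_simp
  ring

@[simp]
theorem gcoef_one (β : ℝ) : gcoef β 1 = -β := by
  simp [gcoef_succ]

theorem gcoef_two (β : ℝ) : gcoef β 2 = β * (β - 1) / 2 := by
  rw [gcoef_succ, gcoef_one]
  push_cast
  ring

theorem gcoef_succ_eq_mul_gcoef_sub_one (β : ℝ) (k : ℕ) :
    gcoef β (k + 1) = -β / (k + 1) * gcoef (β - 1) k := by
  induction k with
  | zero => simp
  | succ k ih =>
    rw [gcoef_succ, ih, gcoef_succ]
    push_cast
    field_simp
    ring

theorem sum_range_gcoef (β : ℝ) (k : ℕ) :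
    ∑ i ∈ range (k + 1), gcoef β i = gcoef (β - 1) k := by
  induction k with
  | zero => simp
  | succ k ih =>
    rw [sum_range_succ, ih, gcoef_succ_eq_mul_gcoef_sub_one, gcoef_succ (β - 1)]
    field_simp
    ring

theorem gcoef_add_two_nonneg (hβ1 : 1 ≤ β) (hβ2 : β ≤ 2) (k : ℕ) : 0 ≤ gcoef β (k + 2) := by
  induction k with
  | zero => rw [gcoef_two]; nlinarith
  | succ k ih =>
    rw [gcoef_succ]
    push_cast
    exact mul_nonneg ih (div_nonneg (by linarith) (by positivity))

theorem gcoef_succ_nonpos (hβ0 : 0 ≤ β) (hβ1 : β ≤ 1) (k : ℕ) : gcoef β (k + 1) ≤ 0 := by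
  induction k with
  | zero => simpa using hβ0
  | succ k ih =>
    rw [gcoef_succ]
    push_cast
    exact mul_nonpos_of_nonpos_of_nonneg ih (div_nonneg (by linarith) (by positivity))

end gcoef

/-- `λ₁ a (k + 2) + λ₀ a (k + 1) + λ₋₁ a k`. -/
noncomputable def wsgdComb (β : ℝ) (a : ℕ → ℝ) (k : ℕ) : ℝ :=
  (β ^ 2 + 3 * β + 2) / 12 * a (k + 2) + (4 - β ^ 2) / 6 * a (k + 1)
    + (β ^ 2 - 3 * β + 2) / 12 * a k

section wsgd

variable {β : ℝ}

theorem wsgd_add_two (β : ℝ) (k : ℕ) : wsgd β (k + 2) = wsgdComb β (gcoef β) k := rfl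

theorem sum_range_wsgd (β : ℝ) (k : ℕ) :
    ∑ j ∈ range (k + 3), wsgd β j = wsgdComb β (gcoef (β - 1)) k := by
  simp only [wsgdComb, ← sum_range_gcoef]
  induction k with
  | zero =>
    simp only [wsgd, sum_range_succ, range_one, sum_singleton, Nat.reduceAdd]
    ring
  | succ k ih =>
    rw [sum_range_succ, ih, wsgd_add_two, wsgdComb]
    simp only [sum_range_succ]
    ring

theorem wsgd_numerator_nonneg {γ x : ℝ} (hβ1 : 1 ≤ β) (hβ2 : β ≤ 2) (hγ1 : β - 1 ≤ γ)
    (hγ2 : γ ≤ β) (hx : 2 - β ≤ x - γ) :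
    0 ≤ (β ^ 2 + 3 * β + 2) * (x - γ) * (x + 1 - γ) + 2 * (4 - β ^ 2) * (x - γ) * (x + 2)
      + (β ^ 2 - 3 * β + 2) * (x + 1) * (x + 2) := by
  obtain ⟨p, t, s, rfl, rfl, rfl⟩ : ∃ p t s : ℝ, β = 2 - p ∧ γ = 1 - p + s ∧ x = 1 + t + s :=
    ⟨2 - β, x - γ - 2 + β, γ - β + 1, by ring, by ring, by ring⟩
  have hp : 0 ≤ p := by linarith
  have hp' : 0 ≤ 1 - p := by linarith
  have ht : 0 ≤ t := by linarith
  have hs : 0 ≤ s := by linarith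
  have hs' : 0 ≤ 1 - s := by linarith
  nlinarith [mul_nonneg hp hp', mul_nonneg (mul_nonneg hp hp') ht, mul_nonneg (mul_nonneg hp hp') hs',
    mul_nonneg (mul_nonneg hp ht) ht, mul_nonneg (mul_nonneg hp hp) ht,
    mul_nonneg (mul_nonneg hp hp') (mul_nonneg ht ht), mul_nonneg (mul_nonneg hp hp') (mul_nonneg ht hs'),
    mul_nonneg (mul_nonneg hp hp') (mul_nonneg hs' hs'), mul_nonneg (mul_nonneg hp hp) hp',
    mul_nonneg ht ht, mul_nonneg (mul_nonneg hp hp) (mul_nonneg ht hs)]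

theorem wsgdComb_gcoef_eq_nonneg_mul {γ : ℝ} {k : ℕ} (hβ1 : 1 ≤ β) (hβ2 : β ≤ 2)
    (hγ1 : β - 1 ≤ γ) (hγ2 : γ ≤ β) (hk : 2 - β ≤ k - γ) :
    ∃ r, 0 ≤ r ∧ wsgdComb β (gcoef γ) k = r * gcoef γ k := by
  refine ⟨((β ^ 2 + 3 * β + 2) * (k - γ) * (k + 1 - γ) + 2 * (4 - β ^ 2) * (k - γ) * (k + 2)
    + (β ^ 2 - 3 * β + 2) * (k + 1) * (k + 2)) / (12 * (k + 1) * (k + 2)),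
    div_nonneg (wsgd_numerator_nonneg hβ1 hβ2 hγ1 hγ2 hk) (by positivity), ?_⟩
  rw [wsgdComb, gcoef_succ, gcoef_succ]
  push_cast
  field_simp
  ring

theorem wsgd_one_nonpos (hβ : 1 ≤ β) : wsgd β 1 ≤ 0 := by
  simp only [wsgd, gcoef_one, gcoef_zero]
  nlinarith

theorem wsgd_zero_add_wsgd_two_nonneg (hβ : 1 ≤ β) : 0 ≤ wsgd β 0 + wsgd β 2 := by
  simp only [wsgd, zero_add, gcoef_two, gcoef_one, gcoef_zero]
  nlinarith [mul_nonneg (sub_nonneg.2 hβ) (sub_nonneg.2 hβ)]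

theorem wsgd_nonneg_of_three_le (hβ1 : 1 ≤ β) (hβ2 : β ≤ 2) {k : ℕ} (hk : 3 ≤ k) :
    0 ≤ wsgd β k := by
  obtain ⟨k, rfl⟩ := Nat.exists_eq_add_of_le' hk
  rcases k with _ | k
  · have hg3 : gcoef β 3 = β * (β - 1) * (2 - β) / 6 := by
      rw [gcoef_succ, gcoef_two]; push_cast; ring
    simp only [wsgd, Nat.reduceAdd, hg3, gcoef_two, gcoef_one]
    nlinarith [mul_nonneg (mul_nonneg (sub_nonneg.2 hβ1) (sub_nonneg.2 hβ2)) (by linarith : 0 ≤ β)]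
  · obtain ⟨r, hr, hw⟩ := wsgdComb_gcoef_eq_nonneg_mul (k := k + 2) hβ1 hβ2 (by linarith) le_rfl
      (by push_cast; linarith)
    rw [show k + 1 + 3 = k + 2 + 2 by ring, wsgd_add_two, hw]
    exact mul_nonneg hr (gcoef_add_two_nonneg hβ1 hβ2 k)

theorem sum_range_wsgd_nonpos (hβ1 : 1 ≤ β) (hβ2 : β ≤ 2) {N : ℕ} (hN : 3 ≤ N) :
    ∑ j ∈ range N, wsgd β j ≤ 0 := by
  obtain ⟨k, rfl⟩ := Nat.exists_eq_add_of_le' hN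
  rw [sum_range_wsgd]
  rcases k with _ | k
  · simp only [wsgdComb, zero_add, gcoef_two, gcoef_one, gcoef_zero]
    nlinarith [mul_nonneg (sub_nonneg.2 hβ1) (sub_nonneg.2 hβ2)]
  · obtain ⟨r, hr, hw⟩ := wsgdComb_gcoef_eq_nonneg_mul (k := k + 1) hβ1 hβ2 le_rfl (by linarith)
      (by push_cast; linarith)
    rw [hw]
    exact mul_nonpos_of_nonneg_of_nonpos hr (gcoef_succ_nonpos (by linarith) (by linarith) k)

end wsgd

section wsgdSym

variable {β : ℝ}

theorem wz_natCast (β : ℝ) (n : ℕ) : wz β n = wsgd β n := by simp [wz]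

theorem wz_of_neg {m : ℤ} (hm : m < 0) : wz β m = 0 := if_pos hm

noncomputable def wsgdSym (β : ℝ) (m : ℕ) : ℝ := wz β (m + 1) + wz β (1 - m)

theorem wz_sub_add_one_add_wz_sub_add_one (β : ℝ) (a b : ℤ) :
    wz β (a - b + 1) + wz β (b - a + 1) = wsgdSym β (a - b).natAbs := by
  rcases Int.natAbs_eq (a - b) with h | h
  · rw [wsgdSym, ← h, show b - a + 1 = 1 - (a - b) by ring]
  · rw [wsgdSym, show ((a - b).natAbs : ℤ) = b - a by omega, add_comm,
      show a - b + 1 = 1 - (b - a) by ring]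

theorem wsgdSym_one (β : ℝ) : wsgdSym β 1 = wsgd β 2 + wsgd β 0 := by
  norm_num [wsgdSym, ← wz_natCast]

theorem wsgdSym_add_two (β : ℝ) (m : ℕ) : wsgdSym β (m + 2) = wsgd β (m + 3) := by
  rw [wsgdSym, wz_of_neg (show (1 : ℤ) - (m + 2 : ℕ) < 0 by omega), add_zero, ← wz_natCast]
  push_cast
  ring_nf

theorem wsgdSym_nonneg (hβ1 : 1 ≤ β) (hβ2 : β ≤ 2) {m : ℕ} (hm : 0 < m) : 0 ≤ wsgdSym β m := by
  rcases m with _ | _ | m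
  · omega
  · rw [wsgdSym_one, add_comm]
    exact wsgd_zero_add_wsgd_two_nonneg hβ1
  · rw [wsgdSym_add_two]
    exact wsgd_nonneg_of_three_le hβ1 hβ2 (by omega)

theorem sum_Icc_wsgdSym_add_wsgd_one (β : ℝ) (k : ℕ) :
    ∑ m ∈ Icc 1 (k + 1), wsgdSym β m + wsgd β 1 = ∑ j ∈ range (k + 3), wsgd β j := by
  induction k with
  | zero =>
    simp only [zero_add, Icc_self, sum_singleton, wsgdSym_one, sum_range_succ, range_one]
    ring
  | succ k ih =>
    rw [sum_Icc_succ_top (by omega), sum_range_succ, ← ih, wsgdSym_add_two]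
    ring

theorem sum_Icc_wsgdSym_le (hβ1 : 1 ≤ β) (hβ2 : β ≤ 2) (K : ℕ) :
    ∑ m ∈ Icc 1 K, wsgdSym β m ≤ -wsgd β 1 := by
  rcases K with _ | k
  · simpa using wsgd_one_nonpos hβ1
  · linarith [sum_Icc_wsgdSym_add_wsgd_one β k, sum_range_wsgd_nonpos hβ1 hβ2 (N := k + 3) le_add_self]

theorem sum_erase_wsgdSym_le (hβ1 : 1 ≤ β) (hβ2 : β ≤ 2) {n : ℕ} (i : Fin n) :
    ∑ l ∈ univ.erase i, wsgdSym β ((i : ℤ) - l).natAbs ≤ -2 * wsgd β 1 := by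
  have := Fin.sum_erase_le_two_nsmul_sum_Icc _ (fun _ => wsgdSym_nonneg hβ1 hβ2) i
  rw [nsmul_eq_mul, Nat.cast_ofNat] at this
  linarith [sum_Icc_wsgdSym_le hβ1 hβ2 n]

end wsgdSym

noncomputable def wsgdMatrix (β θ α c : ℝ) (n : ℕ) : Matrix (Fin n) (Fin n) ℝ :=
  of fun i l => (if i = l then α else 0) - θ * c * wz β ((i : ℤ) - (l : ℤ) + 1)
    - (1 - θ) * c * wz β ((l : ℤ) - (i : ℤ) + 1)

section wsgdMatrix

variable {β θ α c : ℝ} {n : ℕ}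

theorem wsgdMatrix_add_conjTranspose_apply_self (i : Fin n) :
    (wsgdMatrix β θ α c n + (wsgdMatrix β θ α c n)ᴴ) i i = 2 * (α - c * wsgd β 1) := by
  simp only [wsgdMatrix, Matrix.add_apply, conjTranspose_apply, of_apply, star_trivial, if_true,
    sub_self, zero_add, show wz β 1 = wsgd β 1 from wz_natCast β 1]
  ring

theorem wsgdMatrix_add_conjTranspose_apply_of_ne {i l : Fin n} (hil : i ≠ l) :
    (wsgdMatrix β θ α c n + (wsgdMatrix β θ α c n)ᴴ) i l
      = -(c * wsgdSym β ((i : ℤ) - l).natAbs) := by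
  simp only [wsgdMatrix, Matrix.add_apply, conjTranspose_apply, of_apply, star_trivial, if_neg hil,
    if_neg hil.symm, ← wz_sub_add_one_add_wz_sub_add_one]
  ring

theorem isUnit_wsgdMatrix (hβ1 : 1 ≤ β) (hβ2 : β ≤ 2) (hα : 0 < α) (hc : 0 ≤ c) :
    IsUnit (wsgdMatrix β θ α c n) := by
  refine isUnit_of_posDef_add_conjTranspose
    (posDef_of_sum_row_lt_diag (isHermitian_add_transpose_self _) fun i => ?_)
  have hoff : ∀ l ∈ univ.erase i, ‖(wsgdMatrix β θ α c n + (wsgdMatrix β θ α c n)ᴴ) i l‖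
      = c * wsgdSym β ((i : ℤ) - l).natAbs := fun l hl => by
    have hli := ne_of_mem_erase hl
    rw [wsgdMatrix_add_conjTranspose_apply_of_ne hli.symm, norm_neg, Real.norm_of_nonneg]
    refine mul_nonneg hc (wsgdSym_nonneg hβ1 hβ2 ?_)
    have := Fin.val_ne_of_ne hli
    omega
  rw [sum_congr rfl hoff, ← mul_sum, wsgdMatrix_add_conjTranspose_apply_self, RCLike.re_to_real]
  nlinarith [sum_erase_wsgdSym_le hβ1 hβ2 i, wsgd_one_nonpos hβ1]

end wsgdMatrix

-- The index `i : Fin (M - 1)` stands for the grid index `j = i + 1`.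
theorem wsgd_matrix_invertible_general (β θ α : ℝ) (hβ : β ∈ Set.Ioc (1 : ℝ) 2)
    (hα : 0 < α) (M : ℕ) (h : ℝ) (hh : 0 < h) :
    IsUnit (Matrix.of fun i l : Fin (M - 1) =>
      (if i = l then α else 0)
        - θ * h ^ (-β) * wz β ((i : ℤ) - (l : ℤ) + 1)
        - (1 - θ) * h ^ (-β) * wz β ((l : ℤ) - (i : ℤ) + 1)) :=
  isUnit_wsgdMatrix hβ.1.le hβ.2 hα (Real.rpow_nonneg hh.le _)

/-- The coefficient matrix of the WSGD scheme is invertible, hence the scheme is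
uniquely solvable for any right-hand side. Here the index `i : Fin (M-1)` corresponds
to the grid index `j = i + 1`. -/
theorem wsgd_matrix_invertible (β θ α : ℝ) (hβ : β ∈ Set.Ioc (1 : ℝ) 2)
    (hθ : θ ∈ Set.Icc (0 : ℝ) 1) (hα : 0 < α) (M : ℕ) (hM : 2 ≤ M) (h : ℝ) (hh : 0 < h) :
    IsUnit (Matrix.of fun i l : Fin (M - 1) =>
      (if i = l then α else 0)
        - θ * h ^ (-β) * wz β ((i : ℤ) - (l : ℤ) + 1)
        - (1 - θ) * h ^ (-β) * wz β ((l : ℤ) - (i : ℤ) + 1)) :=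
  wsgd_matrix_invertible_general β θ α hβ hα M h hh
end

section
/- Let h > 0, σ ∈ (0,2), and let C_r, C_s, c₀ > 0, ξ ∈ ℝ. Let u, u^r, u^s be real numbers (exact values at a grid point) with u = u^r + ξ u^s, and let U_h, U_h^r, U_h^s and U_{h/2}, U_{h/2}^r, U_{h/2}^s be real numbers (the corresponding computed values on the coarse and fine grids) satisfying U_h = U_h^r + ξ U_h^s and U_{h/2} = U_{h/2}^r + ξ U_{h/2}^s. Assume the error bounds |u^r − U_h^r| ≤ C_r h², |u^r − U_{h/2}^r| ≤ C_r (h/2)², |u^s − U_h^s| ≤ C_s h^σ, and the non-degeneracy condition |U_{h/2}^s − U_h^s| ≥ c₀ h^σ. Define the extrapolated strength ξ_h = (U_{h/2} − U_h)/(U_{h/2}^s − U_h^s) and the corrected solution U^c = U_h + ξ_h (u^s − U_h^s). Then |u − U^c| ≤ C_r (1 + (5/4) C_s/c₀) h²; in particular the corrected solution is second-order accurate even though U_h itself is only accurate of order σ. -/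
/-!
Subtracting the split of the coarse solution from the split of the fine one, the singular parts
contribute `ξ (U_{h/2}ˢ - U_hˢ)`, so the extrapolated strength misses `ξ` only by the regular
difference `(U_{h/2}ʳ - U_hʳ) / (U_{h/2}ˢ - U_hˢ)`, which is `O(h² / h^σ)` by non-degeneracy.
The corrected solution is off by the regular error `O(h²)` plus that strength error times the
singular error `O(h^σ)`, and the powers `h^σ` cancel.
-/

section Extrapolation

variable {K : Type*}

theorem sub_corrected_eq [CommRing K] {ξ η u ur us Uh Uhr Uhs : K}
    (hsplit : u = ur + ξ * us) (hsplith : Uh = Uhr + ξ * Uhs) :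
    u - (Uh + η * (us - Uhs)) = (ur - Uhr) - (η - ξ) * (us - Uhs) := by
  subst hsplit hsplith
  ring

theorem extrapolated_strength_sub_eq [Field K] {ξ Uh Uhr Uhs Uh2 Uh2r Uh2s : K}
    (hsplith : Uh = Uhr + ξ * Uhs) (hsplith2 : Uh2 = Uh2r + ξ * Uh2s) (hD : Uh2s - Uhs ≠ 0) :
    (Uh2 - Uh) / (Uh2s - Uhs) - ξ = (Uh2r - Uhr) / (Uh2s - Uhs) := by
  subst hsplith hsplith2
  field_simp
  ring

variable [Field K] [LinearOrder K] [IsStrictOrderedRing K]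

theorem abs_sub_le_of_two_grids {C h ur Uhr Uh2r : K}
    (er : |ur - Uhr| ≤ C * h ^ 2) (er2 : |ur - Uh2r| ≤ C * (h / 2) ^ 2) :
    |Uh2r - Uhr| ≤ 5 / 4 * C * h ^ 2 :=
  calc |Uh2r - Uhr| ≤ |Uh2r - ur| + |ur - Uhr| := abs_sub_le _ _ _
    _ ≤ C * (h / 2) ^ 2 + C * h ^ 2 := by rw [abs_sub_comm]; exact add_le_add er2 er
    _ = 5 / 4 * C * h ^ 2 := by ring

theorem abs_div_mul_le_of_le {A B c p a d e : K} (hc : 0 < c) (hp : 0 < p)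
    (ha : |a| ≤ A) (hd : c * p ≤ |d|) (he : |e| ≤ B * p) :
    |a / d * e| ≤ A * B / c := by
  have hA : 0 ≤ A := (abs_nonneg a).trans ha
  calc |a / d * e| = |a| / |d| * |e| := by rw [abs_mul, abs_div]
      _ ≤ A / (c * p) * (B * p) := by gcongr
      _ = A * B / c := by field_simp

end Extrapolation

theorem corrected_solution_second_order_general
    (h σ Cr Cs c₀ ξ : ℝ) (hh : 0 < h)
    (hc₀ : 0 < c₀)
    (u ur us Uh Uhr Uhs Uh2 Uh2r Uh2s : ℝ)
    (hsplit : u = ur + ξ * us)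
    (hsplith : Uh = Uhr + ξ * Uhs)
    (hsplith2 : Uh2 = Uh2r + ξ * Uh2s)
    (er : |ur - Uhr| ≤ Cr * h ^ 2)
    (er2 : |ur - Uh2r| ≤ Cr * (h / 2) ^ 2)
    (es : |us - Uhs| ≤ Cs * h ^ σ)
    (hnd : c₀ * h ^ σ ≤ |Uh2s - Uhs|) :
    |u - (Uh + (Uh2 - Uh) / (Uh2s - Uhs) * (us - Uhs))| ≤
      Cr * (1 + 5 / 4 * Cs / c₀) * h ^ 2 := by
  have hpow : 0 < h ^ σ := Real.rpow_pos_of_pos hh σ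
  have hD : Uh2s - Uhs ≠ 0 := abs_pos.mp ((mul_pos hc₀ hpow).trans_le hnd)
  rw [sub_corrected_eq hsplit hsplith, extrapolated_strength_sub_eq hsplith hsplith2 hD]
  have hsingular : |(Uh2r - Uhr) / (Uh2s - Uhs) * (us - Uhs)| ≤ 5 / 4 * Cr * h ^ 2 * Cs / c₀ :=
    abs_div_mul_le_of_le hc₀ hpow (abs_sub_le_of_two_grids er er2) hnd es
  calc |(ur - Uhr) - (Uh2r - Uhr) / (Uh2s - Uhs) * (us - Uhs)|
      ≤ |ur - Uhr| + |(Uh2r - Uhr) / (Uh2s - Uhs) * (us - Uhs)| := abs_sub _ _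
    _ ≤ Cr * h ^ 2 + 5 / 4 * Cr * h ^ 2 * Cs / c₀ := add_le_add er hsingular
    _ = Cr * (1 + 5 / 4 * Cs / c₀) * h ^ 2 := by ring

/-- Second-order accuracy of the extrapolation-based corrected solution: if the exact
value splits as `u = uʳ + ξ uˢ`, the computed values split accordingly on the coarse
grid (step `h`) and the fine grid (step `h/2`), the regular part is approximated with
second order, the singular part only with order `σ < 2`, and the extrapolation
denominator is non-degenerate, then the corrected solution
`U^c = U_h + ξ_h (uˢ - U_hˢ)` with `ξ_h = (U_{h/2} - U_h)/(U_{h/2}ˢ - U_hˢ)`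
is second-order accurate. -/
theorem corrected_solution_second_order
    (h σ Cr Cs c₀ ξ : ℝ) (hh : 0 < h) (hσ : σ ∈ Set.Ioo (0 : ℝ) 2)
    (hCr : 0 < Cr) (hCs : 0 < Cs) (hc₀ : 0 < c₀)
    (u ur us Uh Uhr Uhs Uh2 Uh2r Uh2s : ℝ)
    (hsplit : u = ur + ξ * us)
    (hsplith : Uh = Uhr + ξ * Uhs)
    (hsplith2 : Uh2 = Uh2r + ξ * Uh2s)
    (er : |ur - Uhr| ≤ Cr * h ^ 2)
    (er2 : |ur - Uh2r| ≤ Cr * (h / 2) ^ 2)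
    (es : |us - Uhs| ≤ Cs * h ^ σ)
    (hnd : c₀ * h ^ σ ≤ |Uh2s - Uhs|) :
    |u - (Uh + (Uh2 - Uh) / (Uh2s - Uhs) * (us - Uhs))| ≤
      Cr * (1 + 5 / 4 * Cs / c₀) * h ^ 2 :=
  corrected_solution_second_order_general h σ Cr Cs c₀ ξ hh hc₀ u ur us Uh Uhr Uhs Uh2 Uh2r Uh2s
    hsplit hsplith hsplith2 er er2 es hnd
end
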